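/- arXiv:2105.14406 — 2 statements merged into one kernel-verified Lean document; each statement's English description precedes it below -/
import Mathlib

section
/- Fix d ≥ 1, m > 0, M > 0, s ≥ 1, a finite nonempty index set J with |J| = n ≥ s, a time step Δt > 0, an integer L ≥ 1, and T = L·Δt. Let V₁ : ℝ^d → ℝ be continuously differentiable with ‖∇V₁(x)‖ ≤ M for all x, and for each j ∈ J let ψ_j : ℝ^d → ℝ be twice continuously differentiable with ‖∇ψ_j(x)‖ ≤ M and ‖∇²ψ_j(x)‖ie ≤ M (operator norm) for all x. On a probability space (Ω, F, P), let X⁰, P⁰ : Ω → ℝ^d be random initial data with E‖P⁰‖⁴ ≤ K < ∞, and let ξ₁, …, ξ_L be random subsets of J of size s, each uniformly distributed over all size-s subsets, such that X⁰, P⁰, ξ₁, …, ξ_L are mutually independent. Let (x̃(t), p̃(t)), t ∈ [0, T], be the random batch trajectory: x̃(0) = X⁰, p̃(0) = P⁰, and on each interval [(ℓ−1)Δt, ℓΔt), ℓ = 1, …, L, x̃'(t) = p̃(t)/m and p̃'(t) = −∇V₁(x̃(t)) + (1/s) Σ_{j ∈ ξ_ℓ} ∇ψ_j(x̃(t)).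 Then there is a constant C > 0 depending only on m, M, and K (independent of n, s, L, Δt, and the realizations of the random batches) such that sup_{0 ≤ t ≤ T} E‖p̃(t)‖⁴ ≤ C (1 + T⁴). -/
open MeasureTheory
open scoped ENNReal

/-!
Each batch force is `-∇V₁` plus an average of `s` gradients `∇ψ_j`, so its norm is at most
`2M` whatever the batch is. By the mean value inequality, applied across all the subintervals
at once, every realization satisfies `‖p̃(t) - P⁰‖ ≤ 2Mt`. Hence
`‖p̃(t)‖⁴ ≤ 8 (‖P⁰‖⁴ + (2MT)⁴)` pointwise, and integrating gives `8K + 128 M⁴ T⁴`.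
-/

open Set Finset
open scoped NNReal

theorem norm_inv_card_smul_sum_le {ι E : Type*} [SeminormedAddCommGroup E] [NormedSpace ℝ E]
    (A : Finset ι) (g : ι → E) {M : ℝ} (hM : 0 ≤ M) (hg : ∀ j ∈ A, ‖g j‖ ≤ M) :
    ‖(#A : ℝ)⁻¹ • ∑ j ∈ A, g j‖ ≤ M := by
  rcases A.eq_empty_or_nonempty with rfl | hA
  · simpa using hM
  have hcard : (0 : ℝ) < #A := by exact_mod_cast hA.card_pos
  calc ‖(#A : ℝ)⁻¹ • ∑ j ∈ A, g j‖ ≤ (#A : ℝ)⁻¹ * (#A * M) := by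
        rw [norm_smul, norm_inv, RCLike.norm_natCast]
        gcongr
        exact norm_sum_le_of_le A hg |>.trans_eq (by simp)
    _ = M := by field_simp

theorem norm_neg_add_inv_card_smul_sum_le {ι E : Type*} [SeminormedAddCommGroup E]
    [NormedSpace ℝ E] (a : E) (A : Finset ι) (g : ι → E) {M : ℝ} (hM : 0 ≤ M) (ha : ‖a‖ ≤ M)
    (hg : ∀ j ∈ A, ‖g j‖ ≤ M) : ‖-a + (#A : ℝ)⁻¹ • ∑ j ∈ A, g j‖ ≤ 2 * M :=
  calc ‖-a + (#A : ℝ)⁻¹ • ∑ j ∈ A, g j‖ ≤ ‖a‖ + ‖(#A : ℝ)⁻¹ • ∑ j ∈ A, g j‖ :=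
        norm_neg a ▸ norm_add_le _ _
    _ ≤ 2 * M := by linarith [norm_inv_card_smul_sum_le A g hM hg]

theorem norm_sub_le_of_forall_hasDerivWithinAt_Ici {E : Type*} [NormedAddCommGroup E]
    [NormedSpace ℝ E] {f : ℝ → E} {a b C : ℝ} (hf : ContinuousOn f (Icc a b))
    (hf' : ∀ x ∈ Ico a b, ∃ f', HasDerivWithinAt f f' (Ici x) x ∧ ‖f'‖ ≤ C) :
    ∀ x ∈ Icc a b, ‖f x - f a‖ ≤ C * (x - a) := by
  choose! f' hderiv hbound using hf'
  exact norm_image_sub_le_of_norm_deriv_right_le_segment hf hderiv hbound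

theorem exists_mem_Ico_mul_of_mem_Ico {Δ t : ℝ} {L : ℕ} (hΔ : 0 < Δ) (ht : t ∈ Ico 0 (L * Δ)) :
    ∃ k : Fin L, t ∈ Ico ((k : ℝ) * Δ) (((k : ℝ) + 1) * Δ) := by
  have hq : 0 ≤ t / Δ := div_nonneg ht.1 hΔ.le
  have hlt : ⌊t / Δ⌋₊ < L := (Nat.floor_lt hq).2 ((div_lt_iff₀ hΔ).2 ht.2)
  refine ⟨⟨⌊t / Δ⌋₊, hlt⟩, ?_, ?_⟩
  · exact (le_div_iff₀ hΔ).1 (Nat.floor_le hq)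
  · exact (div_lt_iff₀ hΔ).1 (Nat.lt_floor_add_one _)

theorem norm_sub_le_of_hasDerivWithinAt_mesh {E : Type*} [NormedAddCommGroup E]
    [NormedSpace ℝ E] {f : ℝ → E} {Δ C : ℝ} {L : ℕ} (hΔ : 0 < Δ) (hf : Continuous f)
    (hf' : ∀ k : Fin L, ∀ t ∈ Ico ((k : ℝ) * Δ) (((k : ℝ) + 1) * Δ), ∃ f',
      HasDerivWithinAt f f' (Ico ((k : ℝ) * Δ) (((k : ℝ) + 1) * Δ)) t ∧ ‖f'‖ ≤ C) :
    ∀ t ∈ Icc 0 (L * Δ), ‖f t - f 0‖ ≤ C * t := by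
  intro t ht
  suffices h : ‖f t - f 0‖ ≤ C * (t - 0) by simpa using h
  refine norm_sub_le_of_forall_hasDerivWithinAt_Ici hf.continuousOn (fun x hx => ?_) t ht
  obtain ⟨k, hk⟩ := exists_mem_Ico_mul_of_mem_Ico hΔ hx
  obtain ⟨f', hderiv, hbound⟩ := hf' k x hk
  exact ⟨f', hderiv.mono_of_mem_nhdsWithin (Ico_mem_nhdsGE_of_mem hk), hbound⟩

theorem lintegral_pow_le_of_le_add_const {Ω : Type*} [MeasurableSpace Ω] {μ : Measure Ω}
    [IsProbabilityMeasure μ] {f g : Ω → ℝ≥0} {c : ℝ≥0} (hfg : ∀ ω, f ω ≤ g ω + c) (n : ℕ) :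
    ∫⁻ ω, (f ω : ℝ≥0∞) ^ n ∂μ ≤ 2 ^ (n - 1) * (∫⁻ ω, (g ω : ℝ≥0∞) ^ n ∂μ + (c : ℝ≥0∞) ^ n) :=
  calc ∫⁻ ω, (f ω : ℝ≥0∞) ^ n ∂μ ≤ ∫⁻ ω, 2 ^ (n - 1) * ((g ω : ℝ≥0∞) ^ n + (c : ℝ≥0∞) ^ n) ∂μ :=
        lintegral_mono fun ω => by
          have h : f ω ^ n ≤ 2 ^ (n - 1) * (g ω ^ n + c ^ n) :=
            (pow_le_pow_left₀ zero_le (hfg ω) n).trans (add_pow_le zero_le zero_le n)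
          simpa using ENNReal.coe_le_coe.2 h
    _ = 2 ^ (n - 1) * (∫⁻ ω, (g ω : ℝ≥0∞) ^ n ∂μ + (c : ℝ≥0∞) ^ n) := by
        rw [lintegral_const_mul' _ _ (by simp), lintegral_add_right _ measurable_const,
          lintegral_const, measure_univ, mul_one]

/-- Uniform fourth-moment bound for the momentum of the random batch
Hamiltonian dynamics: under boundedness of `∇V₁`, `∇ψ_j`, `∇²ψ_j` by `M` and a fourth
moment bound `E‖P⁰‖⁴ ≤ K` on the initial momentum, there is `C > 0`, depending only on
`m`, `M` and `K` (independent of `n`, `s`, `L`, `Δt` and the random batches), such that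
`sup_{0 ≤ t ≤ T} E‖p̃(t)‖⁴ ≤ C (1 + T⁴)`. -/
theorem random_batch_momentum_fourth_moment_bound :
    ∀ m M K : ℝ, 0 < m → 0 < M → 0 ≤ K →
    ∃ C : ℝ, 0 < C ∧
    ∀ (d : ℕ), 1 ≤ d →
    ∀ (n s : ℕ), 1 ≤ s → s ≤ n →
    ∀ (Δt : ℝ), 0 < Δt →
    ∀ (L : ℕ), 1 ≤ L →
    ∀ (T : ℝ), T = L * Δt →
    ∀ (V₁ : EuclideanSpace ℝ (Fin d) → ℝ), ContDiff ℝ 1 V₁ →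
    (∀ x, ‖gradient V₁ x‖ ≤ M) →
    ∀ (ψ : Fin n → EuclideanSpace ℝ (Fin d) → ℝ), (∀ j, ContDiff ℝ 2 (ψ j)) →
    (∀ j x, ‖gradient (ψ j) x‖ ≤ M) →
    (∀ j x, ‖fderiv ℝ (fun y => gradient (ψ j) y) x‖ ≤ M) →
    ∀ (Ω : Type) (mΩ : MeasurableSpace Ω) (μ : Measure Ω), IsProbabilityMeasure μ →
    ∀ (X0 P0 : Ω → EuclideanSpace ℝ (Fin d)), Measurable X0 → Measurable P0 →
    (∫⁻ ω, (‖P0 ω‖₊ : ℝ≥0∞) ^ 4 ∂μ) ≤ ENNReal.ofReal K →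
    ∀ ξ : Fin L → Ω → Finset (Fin n),
    (∀ ℓ A, MeasurableSet {ω | ξ ℓ ω = A}) →
    (∀ ℓ ω, (ξ ℓ ω).card = s) →
    -- each batch is uniformly distributed over the size-`s` subsets
    (∀ ℓ (A : Finset (Fin n)), A.card = s →
      μ {ω | ξ ℓ ω = A} = ((n.choose s : ℝ≥0∞))⁻¹) →
    -- `X⁰, P⁰, ξ₁, …, ξ_L` are mutually independent
    (∀ S : Set (EuclideanSpace ℝ (Fin d) × EuclideanSpace ℝ (Fin d)), MeasurableSet S →
      ∀ A : Fin L → Finset (Fin n),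
        μ ({ω | (X0 ω, P0 ω) ∈ S} ∩ ⋂ ℓ, {ω | ξ ℓ ω = A ℓ}) =
          μ {ω | (X0 ω, P0 ω) ∈ S} * ∏ ℓ, μ {ω | ξ ℓ ω = A ℓ}) →
    ∀ xr pr : Ω → ℝ → EuclideanSpace ℝ (Fin d),
    (∀ ω, Continuous (xr ω)) → (∀ ω, Continuous (pr ω)) →
    (∀ ω, xr ω 0 = X0 ω) → (∀ ω, pr ω 0 = P0 ω) →
    -- random batch dynamics on each subinterval `[(ℓ-1)Δt, ℓΔt)`
    (∀ ω (ℓ : Fin L), ∀ t ∈ Set.Ico ((ℓ : ℝ) * Δt) (((ℓ : ℝ) + 1) * Δt),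
      HasDerivWithinAt (xr ω) (m⁻¹ • pr ω t)
        (Set.Ico ((ℓ : ℝ) * Δt) (((ℓ : ℝ) + 1) * Δt)) t ∧
      HasDerivWithinAt (pr ω)
        (-(gradient V₁ (xr ω t)) + (s : ℝ)⁻¹ • ∑ j ∈ ξ ℓ ω, gradient (ψ j) (xr ω t))
        (Set.Ico ((ℓ : ℝ) * Δt) (((ℓ : ℝ) + 1) * Δt)) t) →
    (∀ t, Measurable fun ω => pr ω t) →
    ∀ t ∈ Set.Icc (0 : ℝ) T,
      (∫⁻ ω, (‖pr ω t‖₊ : ℝ≥0∞) ^ 4 ∂μ) ≤ ENNReal.ofReal (C * (1 + T ^ 4)) := by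
  intro m M K _ hM hK
  refine ⟨8 * K + 128 * M ^ 4, by positivity, ?_⟩
  intro d _ n s _ _ Δt hΔt L _ T hT V₁ _ hgV ψ _ hgψ _ Ω _ μ _ X0 P0 _ _ hmoment ξ _ hξc _ _
    xr pr _ hpc _ hp0 hdyn _ t ht
  have hT0 : 0 ≤ T := ht.1.trans ht.2
  have hforce : ∀ ℓ ω x, ‖-(gradient V₁ x) + (s : ℝ)⁻¹ • ∑ j ∈ ξ ℓ ω, gradient (ψ j) x‖
      ≤ 2 * M := fun ℓ ω x =>
    hξc ℓ ω ▸ norm_neg_add_inv_card_smul_sum_le _ _ _ hM.le (hgV x) fun j _ => hgψ j x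
  have hpath : ∀ ω, ‖pr ω t‖₊ ≤ ‖P0 ω‖₊ + (2 * M * T).toNNReal := fun ω => by
    have hdrift := norm_sub_le_of_hasDerivWithinAt_mesh hΔt (hpc ω)
      (fun ℓ x hx => ⟨_, (hdyn ω ℓ x hx).2, hforce ℓ ω (xr ω x)⟩) t (hT ▸ ht)
    rw [hp0] at hdrift
    rw [← NNReal.coe_le_coe, NNReal.coe_add, coe_nnnorm, coe_nnnorm,
      Real.coe_toNNReal _ (by positivity)]
    nlinarith [norm_le_norm_add_norm_sub' (pr ω t) (P0 ω), ht.2]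
  calc ∫⁻ ω, (‖pr ω t‖₊ : ℝ≥0∞) ^ 4 ∂μ
      ≤ 2 ^ 3 * (∫⁻ ω, (‖P0 ω‖₊ : ℝ≥0∞) ^ 4 ∂μ + ENNReal.ofReal (2 * M * T) ^ 4) :=
        lintegral_pow_le_of_le_add_const hpath 4
    _ ≤ 2 ^ 3 * (ENNReal.ofReal K + ENNReal.ofReal (2 * M * T) ^ 4) := by gcongr
    _ = ENNReal.ofReal (8 * K + 128 * M ^ 4 * T ^ 4) := by
        rw [← ENNReal.ofReal_pow (by positivity), ← ENNReal.ofReal_add hK (by positivity),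
          show (2 : ℝ≥0∞) ^ 3 = ENNReal.ofReal 8 by norm_num, ← ENNReal.ofReal_mul (by norm_num)]
        ring_nf
    _ ≤ ENNReal.ofReal ((8 * K + 128 * M ^ 4) * (1 + T ^ 4)) := by
        refine ENNReal.ofReal_le_ofReal ?_
        nlinarith [mul_nonneg hK (pow_nonneg hT0 4), pow_pos hM 4]
end

section
/- Let T > 0, a > 0, and let g : [0, T] → ℝ be a continuous nonnegative function satisfying, for every t ∈ [0, T], the integral inequality g(t)² ≤ a ∫₀^t (g(s) + 1) ds. Then sup_{0 ≤ t ≤ T} g(t) ≤ aT + √(aT); in particular g(T) ≤ aT + √(aT), so if aT ≤ 1 then g(T) ≤ 2√(aT). -/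
/-- Gronwall-type comparison inequality closing the strong error estimate:
if a continuous nonnegative `g : [0,T] → ℝ` satisfies `g(t)² ≤ a ∫₀^t (g(s) + 1) ds`
for all `t ∈ [0,T]`, then `g ≤ aT + √(aT)` on `[0,T]`; in particular `g(T) ≤ aT + √(aT)`
and, if `aT ≤ 1`, `g(T) ≤ 2√(aT)`. -/
theorem gronwall_type_inequality
    (T a : ℝ) (hT : 0 < T) (ha : 0 < a)
    (g : ℝ → ℝ)
    (hg_cont : ContinuousOn g (Set.Icc 0 T))
    (hg_nonneg : ∀ t ∈ Set.Icc (0 : ℝ) T, 0 ≤ g t)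
    (hineq : ∀ t ∈ Set.Icc (0 : ℝ) T,
      g t ^ 2 ≤ a * ∫ s in (0 : ℝ)..t, (g s + 1)) :
    (∀ t ∈ Set.Icc (0 : ℝ) T, g t ≤ a * T + Real.sqrt (a * T)) ∧
    g T ≤ a * T + Real.sqrt (a * T) ∧
    (a * T ≤ 1 → g T ≤ 2 * Real.sqrt (a * T)) := by
  have hTmem : (T : ℝ) ∈ Set.Icc (0 : ℝ) T := ⟨le_of_lt hT, le_refl T⟩
  have h0mem : (0 : ℝ) ∈ Set.Icc (0 : ℝ) T := ⟨le_refl 0, le_of_lt hT⟩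
  obtain ⟨t₀, ht₀, hmax⟩ :=
    isCompact_Icc.exists_isMaxOn (Set.nonempty_of_mem h0mem) hg_cont
  set M := g t₀ with hM
  have hmax' : ∀ t ∈ Set.Icc (0 : ℝ) T, g t ≤ M := fun t ht => hmax ht
  have hM0 : 0 ≤ M := hg_nonneg t₀ ht₀
  set c := a * T with hc
  have hc0 : 0 < c := mul_pos ha hT
  have hs : Real.sqrt c ^ 2 = c := Real.sq_sqrt hc0.le
  have hs0 : 0 ≤ Real.sqrt c := Real.sqrt_nonneg c
  -- bound the integral
  have hsub : Set.Icc (0 : ℝ) t₀ ⊆ Set.Icc (0 : ℝ) T :=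
    Set.Icc_subset_Icc le_rfl ht₀.2
  have hint : IntervalIntegrable (fun s => g s + 1) MeasureTheory.volume 0 t₀ := by
    apply ContinuousOn.intervalIntegrable
    rw [Set.uIcc_of_le ht₀.1]
    exact (hg_cont.mono hsub).add continuousOn_const
  have hmono : (∫ s in (0 : ℝ)..t₀, (g s + 1)) ≤ ∫ s in (0 : ℝ)..t₀, (M + 1) := by
    apply intervalIntegral.integral_mono_on ht₀.1 hint intervalIntegrable_const
    intro s hs
    have := hmax' s (hsub hs)
    linarith
  have hconst : (∫ s in (0 : ℝ)..t₀, (M + 1)) = t₀ * (M + 1) := by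
    simp [intervalIntegral.integral_const, smul_eq_mul]; ring
  have hMsq : M ^ 2 ≤ c * (M + 1) := by
    have h1 := hineq t₀ ht₀
    have h2 : a * (∫ s in (0 : ℝ)..t₀, (g s + 1)) ≤ a * (t₀ * (M + 1)) := by
      apply mul_le_mul_of_nonneg_left _ ha.le
      rw [← hconst]; exact hmono
    have h3 : a * (t₀ * (M + 1)) ≤ c * (M + 1) := by
      rw [hc]
      have hM1 : 0 ≤ M + 1 := by linarith
      nlinarith [mul_le_mul_of_nonneg_right (mul_le_mul_of_nonneg_left ht₀.2 ha.le) hM1]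
    linarith
  have hMle : M ≤ c + Real.sqrt c := by
    by_contra h
    push_neg at h
    nlinarith [hs, hs0, hMsq, hc0]
  have hmain : ∀ t ∈ Set.Icc (0 : ℝ) T, g t ≤ a * T + Real.sqrt (a * T) := by
    intro t ht
    exact le_trans (hmax' t ht) hMle
  refine ⟨hmain, hmain T hTmem, fun h1 => ?_⟩
  have hcs : c ≤ Real.sqrt c := by
    nlinarith [hs, hs0]
  have := hmain T hTmem
  rw [← hc] at this
  linarith
end
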